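/- arXiv:2006.14581 — 2 statements merged into one kernel-verified Lean document; each statement's English description precedes it below -/
import Mathlib

section
/- Optimal recovery of the integral from interval means on H^ω: Let ω be a concave modulus of continuity, E a nontrivial real Banach space, a < b, n ≥ 1, h > 0 with 2nh < b − a. Call knots t = (t₁,…,t_n) admissible if a ≤ t₁ − h, t_i + h < t_{i+1} − h for i = 1,…,n−1, and t_n + h ≤ b; for admissible t let I_t(f) = ( (1/(2h))∫_{t₁−h}^{t₁+h} f(u) du, …, (1/(2h))∫_{t_n−h}^{t_n+h} f(u) du ) ∈ Eⁿ. Then the infimum, over all admissible knots t and all maps Φ: Eⁿ → E, of sup_{f ∈ H^ω([a,b],E)} ‖∫_a^b f(u) du − Φ(I_t(f))‖ equals 2n·(1 − 2nh/(b−a))·∫_0^{(b−a)/(2n)} ω(t) dt. The infimum is attained at the uniform knots t*_k = a + (2k−1)(b−a)/(2n), k = 1,…,n, together with the method Φ*(y₁,…,y_n) = ((b−a)/n)·(y₁ + … + y_n). -/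
open MeasureTheory Set

/-- A modulus of continuity: `ω 0 = 0`, continuous, non-decreasing and subadditive on `[0, ∞)`. -/
def IsModulus (ω : ℝ → ℝ) : Prop :=
  ω 0 = 0 ∧ ContinuousOn ω (Set.Ici 0) ∧ MonotoneOn ω (Set.Ici 0) ∧
    ∀ s t : ℝ, 0 ≤ s → 0 ≤ t → ω (s + t) ≤ ω s + ω t

/-- The class `H^ω([a,b], E)`. -/
def HHolder {E : Type*} [NormedAddCommGroup E] (ω : ℝ → ℝ) (a b : ℝ) (f : ℝ → E) : Prop :=
  ∀ s ∈ Set.Icc a b, ∀ t ∈ Set.Icc a b, ‖f t - f s‖ ≤ ω |t - s|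


/-- Admissible knots `t₁, …, t_n`: `a ≤ t₁ − h`, `tᵢ + h < t_{i+1} − h`, `t_n + h ≤ b`. -/
def AdmKnots (a b h : ℝ) (n : ℕ) (t : ℕ → ℝ) : Prop :=
  a ≤ t 1 - h ∧ (∀ i, 1 ≤ i → i < n → t i + h < t (i + 1) - h) ∧ t n + h ≤ b

/-- The information operator: mean values of `f` over the intervals `[tᵢ − h, tᵢ + h]`. -/
noncomputable def meanInfo {E : Type*} [NormedAddCommGroup E] [NormedSpace ℝ E]
    (h : ℝ) (n : ℕ) (t : ℕ → ℝ) (f : ℝ → E) : Fin n → E :=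
  fun i => (1 / (2 * h)) • ∫ u in (t ((i : ℕ) + 1) - h)..(t ((i : ℕ) + 1) + h), f u

/-- The uniform knots `t*_k = a + (2k − 1)(b − a)/(2n)`, `k = 1, …, n`. -/
noncomputable def uniformKnots (a b : ℝ) (n : ℕ) : ℕ → ℝ :=
  fun k => a + (2 * (k : ℝ) - 1) * (b - a) / (2 * (n : ℝ))

/-!
Upper bound. Cut `[a, b]` into the `n` cells `[c - D, c + D]`, `D = (b - a) / (2n)`, centred at
the uniform knots. Matching the point `c + h + s (D - h)` of `[c + h, c + D]` with the point
`c + h - s h` of `[c, c + h]` (the same `s ∈ [0, 1]`, at distance `s D`) shows that the averages of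
`f` over these two intervals differ by at most the average of `ω` over `[0, D]`; the same holds on
the left half of the cell, and the `2n` half-cells add up to the error bound.

Lower bound. For any admissible knots let `φ = F ∘ dist(·, knots)`, where the profile `F` glues a
reflected copy of `ω` scaled by `h / D` on `[0, h]` to a copy scaled by `1 - h / D` on `[h, D]`;
concavity of `ω` makes `F`, hence `φ`, `ω`-continuous, and `∫₀ʰ F = 0` makes every mean of `φ`
vanish. So `φ e` and `-φ e` carry the same information and no method can err by less than
`|∫ φ|`, which is at least the claimed value.
-/

open intervalIntegral

namespace IsModulus

variable {ω : ℝ → ℝ}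

lemma nonneg (hω : IsModulus ω) {s : ℝ} (hs : 0 ≤ s) : 0 ≤ ω s :=
  hω.1 ▸ hω.2.2.1 self_mem_Ici hs hs

lemma mono (hω : IsModulus ω) {s t : ℝ} (hs : 0 ≤ s) (hst : s ≤ t) : ω s ≤ ω t :=
  hω.2.2.1 hs (hs.trans hst) hst

lemma sub_le (hω : IsModulus ω) {s t : ℝ} (hs : 0 ≤ s) (hst : s ≤ t) :
    ω t - ω s ≤ ω (t - s) := by
  have := hω.2.2.2 (t - s) s (sub_nonneg.2 hst) hs
  rw [sub_add_cancel] at this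
  linarith

lemma continuousOn_of_dist_le {X : Type*} [PseudoMetricSpace X] (hω : IsModulus ω)
    {f : ℝ → X} {s : Set ℝ} (hf : ∀ x ∈ s, ∀ y ∈ s, dist (f x) (f y) ≤ ω |x - y|) :
    ContinuousOn f s := by
  intro x hx
  rw [ContinuousWithinAt, tendsto_iff_dist_tendsto_zero]
  have hω0 : Filter.Tendsto ω (nhdsWithin 0 (Ici 0)) (nhds 0) := by
    simpa only [ContinuousWithinAt, hω.1] using hω.2.1 0 self_mem_Ici
  have habs : Filter.Tendsto (fun y => |y - x|) (nhdsWithin x s) (nhdsWithin 0 (Ici 0)) := by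
    refine tendsto_nhdsWithin_iff.2
      ⟨?_, Filter.Eventually.of_forall fun y => mem_Ici.2 (abs_nonneg _)⟩
    simpa using ((continuous_id.sub continuous_const).abs.tendsto' x 0 (by simp)).mono_left
      nhdsWithin_le_nhds
  exact squeeze_zero' (Filter.Eventually.of_forall fun _ => dist_nonneg)
    (eventually_nhdsWithin_of_forall fun y hy => hf y hy x hx) (hω0.comp habs)

lemma mul_le_of_concaveOn (hω : IsModulus ω) (hconc : ConcaveOn ℝ (Ici 0) ω) {μ x : ℝ}
    (hμ0 : 0 ≤ μ) (hμ1 : μ ≤ 1) (hx : 0 ≤ x) : μ * ω x ≤ ω (μ * x) := by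
  simpa [hω.1] using hconc.2 (mem_Ici.2 hx) (mem_Ici.2 le_rfl) hμ0 (sub_nonneg.2 hμ1) (by ring)

lemma mul_sub_le_of_concaveOn (hω : IsModulus ω) (hconc : ConcaveOn ℝ (Ici 0) ω) {μ s t : ℝ}
    (hμ0 : 0 < μ) (hμ1 : μ ≤ 1) (hs : 0 ≤ s) (hst : s ≤ t) :
    μ * ω (t / μ) - μ * ω (s / μ) ≤ ω (t - s) := by
  have hsub := hω.sub_le (div_nonneg hs hμ0.le) (div_le_div_of_nonneg_right hst hμ0.le)
  have hscale := hω.mul_le_of_concaveOn hconc hμ0.le hμ1 (div_nonneg (sub_nonneg.2 hst) hμ0.le)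
  rw [← sub_div] at hsub
  rw [mul_div_cancel₀ _ hμ0.ne'] at hscale
  nlinarith

end IsModulus

lemma Monotone.sub_mul_le_integral {g : ℝ → ℝ} (hg : Monotone g) (c x : ℝ) :
    (x - c) * g c ≤ ∫ u in c..x, g u := by
  rcases le_total c x with hcx | hxc
  · simpa using integral_mono_on hcx intervalIntegrable_const
      (hg.intervalIntegrable (μ := volume)) fun u hu => hg hu.1
  · have := integral_mono_on hxc (hg.intervalIntegrable (μ := volume)) intervalIntegrable_const
      fun u hu => hg hu.2
    rw [intervalIntegral.integral_const, smul_eq_mul] at this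
    rw [integral_symm]
    linarith

lemma integral_comp_abs_sub {E : Type*} [NormedAddCommGroup E] [NormedSpace ℝ E] {g : ℝ → E}
    (hg : Continuous g) {p c q : ℝ} (hpc : p ≤ c) (hcq : c ≤ q) :
    ∫ x in p..q, g |x - c| = (∫ r in (0:ℝ)..(c - p), g r) + ∫ r in (0:ℝ)..(q - c), g r := by
  have hint := (show Continuous fun x => g |x - c| by fun_prop).intervalIntegrable (μ := volume)
  rw [← integral_add_adjacent_intervals (hint p c) (hint c q)]
  congr 1
  · rw [integral_congr (g := fun x => g (c - x)) fun x hx => by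
      simp only [abs_of_nonpos (sub_nonpos.2 (uIcc_of_le hpc ▸ hx).2), neg_sub],
      integral_comp_sub_left, sub_self]
  · rw [integral_congr (g := fun x => g (x - c)) fun x hx => by
      simp only [abs_of_nonneg (sub_nonneg.2 (uIcc_of_le hcq ▸ hx).1)],
      integral_comp_sub_right, sub_self]

lemma Finset.sum_le_add_card_sub_one_mul {ι : Type*} [DecidableEq ι] {s : Finset ι} {j : ι}
    (hj : j ∈ s) {y : ι → ℝ} {M : ℝ} (hy : ∀ i ∈ s, y i ≤ M) :
    ∑ i ∈ s, y i ≤ y j + ((s.card : ℝ) - 1) * M := by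
  rw [← Finset.add_sum_erase s y hj]
  have := Finset.sum_le_card_nsmul (s.erase j) y M fun i hi => hy i (Finset.mem_of_mem_erase hi)
  rw [Finset.card_erase_of_mem hj, nsmul_eq_mul, Nat.cast_sub (Finset.card_pos.2 ⟨j, hj⟩)] at this
  push_cast at this
  linarith

lemma Metric.infDist_eq_dist_of_forall_le {α : Type*} [PseudoMetricSpace α] {s : Set α}
    {x y : α} (hy : y ∈ s) (hmin : ∀ z ∈ s, dist x y ≤ dist x z) : Metric.infDist x s = dist x y :=
  le_antisymm (Metric.infDist_le_dist_of_mem hy) ((Metric.le_infDist ⟨y, hy⟩).2 hmin)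

lemma norm_integral_le_of_forall_norm_sub_le {E F : Type*} [NormedAddCommGroup E]
    [NormedSpace ℝ E] {P : (ℝ → E) → Prop} {I : (ℝ → E) → F} {Φ : F → E} {a b c : ℝ}
    (hc : ∀ f, P f → ‖(∫ u in a..b, f u) - Φ (I f)‖ ≤ c) {g : ℝ → E} (hg : P g)
    (hg' : P (-g)) (hI : I (-g) = I g) : ‖∫ u in a..b, g u‖ ≤ c := by
  have h₂ := hc (-g) hg'
  simp only [Pi.neg_apply, intervalIntegral.integral_neg, hI] at h₂
  have := norm_sub_le ((∫ u in a..b, g u) - Φ (I g)) (-(∫ u in a..b, g u) - Φ (I g))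
  rw [sub_sub_sub_cancel_right, sub_neg_eq_add, ← two_smul ℝ, norm_smul, Real.norm_two] at this
  linarith [hc g hg]

section HHolder

variable {E : Type*} [NormedAddCommGroup E] {ω : ℝ → ℝ} {a b : ℝ} {f : ℝ → E}

lemma HHolder.mono {c d : ℝ} (hf : HHolder ω a b f) (hca : a ≤ c) (hdb : d ≤ b) :
    HHolder ω c d f :=
  fun s hs t ht => hf s ⟨hca.trans hs.1, hs.2.trans hdb⟩ t ⟨hca.trans ht.1, ht.2.trans hdb⟩

lemma HHolder.neg (hf : HHolder ω a b f) : HHolder ω a b (-f) :=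
  fun s hs t ht => by simpa only [Pi.neg_apply, neg_sub_neg, norm_sub_rev] using hf s hs t ht

lemma HHolder.continuousOn (hω : IsModulus ω) (hf : HHolder ω a b f) :
    ContinuousOn f (Icc a b) :=
  hω.continuousOn_of_dist_le fun x hx y hy => by
    rw [dist_eq_norm]; exact hf y hy x hx

lemma HHolder.intervalIntegrable (hω : IsModulus ω) (hf : HHolder ω a b f) {c d : ℝ}
    (hc : c ∈ Icc a b) (hd : d ∈ Icc a b) : IntervalIntegrable f volume c d :=
  ((hf.continuousOn hω).mono (uIcc_subset_Icc hc hd)).intervalIntegrable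

end HHolder

section UniformMethod

variable {E : Type*} [NormedAddCommGroup E] [NormedSpace ℝ E] {ω : ℝ → ℝ} {f : ℝ → E}

lemma norm_average_sub_average_le (hω : IsModulus ω) {x y z : ℝ} (hxy : x < y) (hyz : y < z)
    (hf : HHolder ω x z f) :
    ‖(z - y)⁻¹ • (∫ u in y..z, f u) - (y - x)⁻¹ • ∫ u in x..y, f u‖ ≤
      (z - x)⁻¹ * ∫ s in (0:ℝ)..(z - x), ω s := by
  -- both averages become integrals over `s ∈ [0, 1]`, of values of `f` at points `(z - x) s` apart
  have hR : (z - y)⁻¹ • (∫ u in y..z, f u) = ∫ s in (0:ℝ)..1, f ((z - y) * s + y) := by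
    rw [integral_comp_mul_add _ (sub_pos.2 hyz).ne']; simp
  have hL : (y - x)⁻¹ • (∫ u in x..y, f u) = ∫ s in (0:ℝ)..1, f (y - (y - x) * s) := by
    rw [integral_comp_sub_mul _ (sub_pos.2 hxy).ne']; simp
  have hcont := hf.continuousOn hω
  have h01 : uIcc (0:ℝ) 1 = Icc 0 1 := uIcc_of_le zero_le_one
  have hpair :
      ∀ s ∈ uIcc (0:ℝ) 1, (z - y) * s + y ∈ Icc x z ∧ y - (y - x) * s ∈ Icc x z := by
    rw [h01]
    exact fun s hs => ⟨⟨by nlinarith [hs.1], by nlinarith [hs.2]⟩,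
      ⟨by nlinarith [hs.2], by nlinarith [hs.1]⟩⟩
  have hintR : IntervalIntegrable (fun s => f ((z - y) * s + y)) volume 0 1 :=
    (hcont.comp (by fun_prop) fun s hs => (hpair s hs).1).intervalIntegrable
  have hintL : IntervalIntegrable (fun s => f (y - (y - x) * s)) volume 0 1 :=
    (hcont.comp (by fun_prop) fun s hs => (hpair s hs).2).intervalIntegrable
  have hintω : IntervalIntegrable (fun s => ω ((z - x) * s)) volume 0 1 :=
    (hω.2.1.comp (by fun_prop) fun s hs => mem_Ici.2 <| mul_nonneg (by linarith)
      (h01 ▸ hs).1).intervalIntegrable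
  rw [hR, hL, ← integral_sub hintR hintL]
  calc ‖∫ s in (0:ℝ)..1, (f ((z - y) * s + y) - f (y - (y - x) * s))‖
      ≤ ∫ s in (0:ℝ)..1, ω ((z - x) * s) := by
        refine norm_integral_le_of_norm_le zero_le_one
          (Filter.Eventually.of_forall fun s hs => ?_) hintω
        obtain ⟨hu, hv⟩ := hpair s (h01 ▸ Ioc_subset_Icc_self hs)
        have hdist : |(z - y) * s + y - (y - (y - x) * s)| = (z - x) * s := by
          rw [abs_of_nonneg (by nlinarith [hs.1])]; ring
        simpa only [hdist] using hf _ hv _ hu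
    _ = (z - x)⁻¹ * ∫ s in (0:ℝ)..(z - x), ω s := by
        rw [integral_comp_mul_left _ (sub_pos.2 (hxy.trans hyz)).ne']; simp

lemma norm_integral_sub_mean_le (hω : IsModulus ω) {h D c : ℝ} (hh : 0 < h) (hhD : h < D)
    (hf : HHolder ω (c - D) (c + D) f) :
    ‖(∫ u in (c - D)..(c + D), f u) - (D / h) • ∫ u in (c - h)..(c + h), f u‖ ≤
      2 * (1 - h / D) * ∫ s in (0:ℝ)..D, ω s := by
  have hR := norm_average_sub_average_le hω (x := c) (y := c + h) (z := c + D) (by linarith)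
    (by linarith) (hf.mono (by linarith) le_rfl)
  have hL := norm_average_sub_average_le hω (x := c - D) (y := c - h) (z := c) (by linarith)
    (by linarith) (hf.mono le_rfl (by linarith))
  rw [show c + D - (c + h) = D - h by ring, show c + h - c = h by ring,
    show c + D - c = D by ring] at hR
  rw [show c - h - (c - D) = D - h by ring, show c - (c - h) = h by ring,
    show c - (c - D) = D by ring] at hL
  have hint : ∀ p q, c - D ≤ p → p ≤ c + D → c - D ≤ q → q ≤ c + D →
      IntervalIntegrable f volume p q := fun p q hp hp' hq hq' =>
    hf.intervalIntegrable hω ⟨hp, hp'⟩ ⟨hq, hq'⟩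
  have hsplit : (∫ u in (c - D)..(c + D), f u) - (D / h) • ∫ u in (c - h)..(c + h), f u =
      (D - h) • ((D - h)⁻¹ • (∫ u in (c + h)..(c + D), f u) - h⁻¹ • ∫ u in c..(c + h), f u) -
      (D - h) • (h⁻¹ • (∫ u in (c - h)..c, f u) - (D - h)⁻¹ • ∫ u in (c - D)..(c - h), f u) := by
    rw [← integral_add_adjacent_intervals (hint (c - D) (c - h) ..) (hint (c - h) (c + D) ..),
      ← integral_add_adjacent_intervals (hint (c - h) c ..) (hint c (c + D) ..),
      ← integral_add_adjacent_intervals (hint c (c + h) ..) (hint (c + h) (c + D) ..),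
      ← integral_add_adjacent_intervals (hint (c - h) c ..) (hint c (c + h) ..)]
    · have : D - h ≠ 0 := (sub_pos.2 hhD).ne'
      match_scalars <;> field_simp <;> ring
    all_goals linarith
  rw [hsplit]
  calc _ ≤ (D - h) * (D⁻¹ * ∫ s in (0:ℝ)..D, ω s) + (D - h) * (D⁻¹ * ∫ s in (0:ℝ)..D, ω s) := by
        refine (norm_sub_le _ _).trans (add_le_add ?_ ?_) <;>
          rw [norm_smul, Real.norm_of_nonneg (by linarith)] <;> gcongr
    _ = 2 * (1 - h / D) * ∫ s in (0:ℝ)..D, ω s := by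
        field_simp [(hh.trans hhD).ne']; ring

lemma norm_integral_sub_sum_means_le (hω : IsModulus ω) {h D a : ℝ} (hh : 0 < h) (hhD : h < D)
    (n : ℕ) (hf : HHolder ω a (a + 2 * n * D) f) :
    ‖(∫ u in a..(a + 2 * n * D), f u) - ∑ k ∈ Finset.range n,
        (D / h) • ∫ u in (a + (2 * k + 1) * D - h)..(a + (2 * k + 1) * D + h), f u‖ ≤
      2 * n * (1 - h / D) * ∫ s in (0:ℝ)..D, ω s := by
  induction n with
  | zero => simp
  | succ m ih =>
    have h1 : a ≤ a + 2 * m * D := by nlinarith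
    have h2 : a + 2 * m * D ≤ a + 2 * ↑(m + 1) * D := by push_cast; nlinarith
    have hc1 : a + (2 * m + 1) * D - D = a + 2 * m * D := by ring
    have hc2 : a + (2 * m + 1) * D + D = a + 2 * ↑(m + 1) * D := by push_cast; ring
    have hper := norm_integral_sub_mean_le hω hh hhD (c := a + (2 * m + 1) * D)
      (by rw [hc1, hc2]; exact hf.mono h1 le_rfl)
    rw [hc1, hc2] at hper
    rw [Finset.sum_range_succ, ← integral_add_adjacent_intervals
      (hf.intervalIntegrable hω ⟨le_rfl, h1.trans h2⟩ ⟨h1, h2⟩)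
      (hf.intervalIntegrable hω ⟨h1, h2⟩ ⟨h1.trans h2, le_rfl⟩)]
    calc _ = ‖((∫ u in a..(a + 2 * m * D), f u) - ∑ k ∈ Finset.range m,
            (D / h) • ∫ u in (a + (2 * k + 1) * D - h)..(a + (2 * k + 1) * D + h), f u) +
          ((∫ u in (a + 2 * m * D)..(a + 2 * ↑(m + 1) * D), f u) -
            (D / h) • ∫ u in (a + (2 * m + 1) * D - h)..(a + (2 * m + 1) * D + h), f u)‖ := by
          congr 1; abel
      _ ≤ _ := (norm_add_le _ _).trans (add_le_add (ih (hf.mono le_rfl h2)) hper)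
      _ = _ := by push_cast; ring

end UniformMethod

lemma uniformKnots_eq {a b : ℝ} {n : ℕ} {D : ℝ} (hD : D = (b - a) / (2 * n)) (k : ℕ) :
    uniformKnots a b n k = a + (2 * k - 1) * D := by
  rw [uniformKnots, hD, mul_div_assoc]

lemma admKnots_uniformKnots {a b h : ℝ} {n : ℕ} (hn : 0 < n) (hnh : 2 * n * h < b - a) :
    AdmKnots a b h n (uniformKnots a b n) := by
  set D := (b - a) / (2 * n) with hD
  have hn' : (0 : ℝ) < n := Nat.cast_pos.2 hn
  have hhD : h < D := by rw [hD, lt_div_iff₀ (by positivity)]; linarith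
  have hb : b = a + 2 * n * D := by rw [hD]; field_simp; ring
  refine ⟨?_, fun i _ _ => ?_, ?_⟩ <;> simp only [uniformKnots_eq hD] <;> push_cast
  · linarith
  · linarith
  · rw [hb]; linarith

lemma smul_sum_meanInfo_uniformKnots {E : Type*} [NormedAddCommGroup E] [NormedSpace ℝ E]
    {a b h : ℝ} {n : ℕ} {D : ℝ} (hD : D = (b - a) / (2 * n)) (f : ℝ → E) :
    ((b - a) / n) • ∑ i : Fin n, meanInfo h n (uniformKnots a b n) f i =
      ∑ k ∈ Finset.range n,
        (D / h) • ∫ u in (a + (2 * k + 1) * D - h)..(a + (2 * k + 1) * D + h), f u := by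
  rw [Finset.smul_sum, Finset.sum_range]
  refine Finset.sum_congr rfl fun k _ => ?_
  rw [meanInfo, smul_smul, uniformKnots_eq hD]
  congr 1
  · rw [hD]; ring
  · congr 1 <;> push_cast <;> ring

section ExtremalFunction

variable {ω : ℝ → ℝ} {h D : ℝ}

noncomputable def extremalProfile (ω : ℝ → ℝ) (h D r : ℝ) : ℝ :=
  h / D ^ 2 * (∫ s in (0:ℝ)..D, ω s) +
    if r ≤ h then -(h / D * ω ((h - r) / (h / D)))
    else (1 - h / D) * ω ((min r D - h) / (1 - h / D))

lemma extremalProfile_mono (hω : IsModulus ω) (hh : 0 < h) (hhD : h < D) :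
    Monotone (extremalProfile ω h D) := by
  intro r r' hrr'
  have hl0 : 0 < h / D := div_pos hh (hh.trans hhD)
  have hl1 : 0 < 1 - h / D := by rw [sub_pos, div_lt_one (hh.trans hhD)]; exact hhD
  unfold extremalProfile
  split_ifs with h₁ h₂ h₃
  · gcongr
    exact hω.mono (div_nonneg (by linarith) hl0.le) (by gcongr)
  · have := hω.nonneg (div_nonneg (sub_nonneg.2 h₁) hl0.le)
    have := hω.nonneg (div_nonneg (sub_nonneg.2 (le_min (le_of_not_ge h₂) hhD.le)) hl1.le)
    nlinarith
  · linarith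
  · gcongr
    exact hω.mono (div_nonneg (sub_nonneg.2 (le_min (le_of_not_ge h₁) hhD.le)) hl1.le)
      (by gcongr)

lemma extremalProfile_sub_le (hω : IsModulus ω) (hconc : ConcaveOn ℝ (Ici 0) ω)
    (hh : 0 < h) (hhD : h < D) {r r' : ℝ} (hrr' : r ≤ r') :
    extremalProfile ω h D r' - extremalProfile ω h D r ≤ ω (r' - r) := by
  have hl0 : 0 < h / D := div_pos hh (hh.trans hhD)
  have hl1 : h / D < 1 := by rw [div_lt_one (hh.trans hhD)]; exact hhD
  have hmin : min r' D - min r D ≤ r' - r :=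
    (le_abs_self _).trans
      ((abs_min_sub_min_le_max r' D r D).trans (by simp [abs_of_nonneg, hrr']))
  unfold extremalProfile
  split_ifs with h₁ h₂ h₃
  · have := hω.mul_sub_le_of_concaveOn hconc hl0 hl1.le (sub_nonneg.2 h₁)
      (sub_le_sub_left hrr' h)
    rw [sub_sub_sub_cancel_left] at this
    linarith
  · linarith
  · have hu : 0 ≤ h - r := sub_nonneg.2 h₃
    have hv : 0 ≤ min r' D - h := sub_nonneg.2 (le_min (by linarith) hhD.le)
    have hjensen := hconc.2 (mem_Ici.2 (div_nonneg hu hl0.le)) (mem_Ici.2 (div_nonneg hv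
      (sub_nonneg.2 hl1.le))) hl0.le (sub_nonneg.2 hl1.le) (add_sub_cancel _ _)
    simp only [smul_eq_mul, mul_div_cancel₀ _ hl0.ne', mul_div_cancel₀ _ (sub_pos.2 hl1).ne']
      at hjensen
    have := hω.mono (add_nonneg hu hv) (show h - r + (min r' D - h) ≤ r' - r by
      linarith [min_le_left r' D])
    linarith
  · have := hω.mul_sub_le_of_concaveOn hconc (sub_pos.2 hl1) (by linarith)
      (sub_nonneg.2 (le_min (le_of_not_ge h₃) hhD.le))
      (sub_le_sub_right (min_le_min_right D hrr') h)
    rw [sub_sub_sub_cancel_right] at this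
    have := hω.mono (by linarith [min_le_min_right D hrr']) hmin
    linarith

lemma abs_extremalProfile_sub_le (hω : IsModulus ω) (hconc : ConcaveOn ℝ (Ici 0) ω)
    (hh : 0 < h) (hhD : h < D) (r r' : ℝ) :
    |extremalProfile ω h D r - extremalProfile ω h D r'| ≤ ω |r - r'| := by
  wlog hle : r' ≤ r generalizing r r'
  · rw [abs_sub_comm, abs_sub_comm r]; exact this r' r (le_of_not_ge hle)
  rw [abs_of_nonneg (sub_nonneg.2 (extremalProfile_mono hω hh hhD hle)),
    abs_of_nonneg (sub_nonneg.2 hle)]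
  exact extremalProfile_sub_le hω hconc hh hhD hle

lemma continuous_extremalProfile (hω : IsModulus ω) (hconc : ConcaveOn ℝ (Ici 0) ω)
    (hh : 0 < h) (hhD : h < D) : Continuous (extremalProfile ω h D) :=
  continuousOn_univ.1 <| hω.continuousOn_of_dist_le fun r _ r' _ =>
    abs_extremalProfile_sub_le hω hconc hh hhD r r'

lemma extremalProfile_of_le (hhD : h < D) {r : ℝ} (hr : D ≤ r) :
    extremalProfile ω h D r = extremalProfile ω h D D := by
  unfold extremalProfile
  rw [if_neg (by linarith), if_neg (by linarith), min_eq_right hr, min_self]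

lemma extremalProfile_le (hω : IsModulus ω) (hh : 0 < h) (hhD : h < D) (r : ℝ) :
    extremalProfile ω h D r ≤ extremalProfile ω h D D := by
  rcases le_total r D with hr | hr
  · exact extremalProfile_mono hω hh hhD hr
  · exact (extremalProfile_of_le hhD hr).le

lemma integral_extremalProfile_eq_zero (hω : IsModulus ω) (hh : 0 < h) (hhD : h < D) :
    ∫ r in (0:ℝ)..h, extremalProfile ω h D r = 0 := by
  have hl0 : 0 < h / D := div_pos hh (hh.trans hhD)
  have hcongr : EqOn (extremalProfile ω h D)
      (fun r => h / D ^ 2 * (∫ s in (0:ℝ)..D, ω s) - h / D * ω ((h - r) / (h / D))) (uIcc 0 h) :=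
    fun r hr => by
      simp only [extremalProfile, if_pos (uIcc_of_le hh.le ▸ hr).2, sub_eq_add_neg]
  have hint : IntervalIntegrable (fun r => ω ((h - r) / (h / D))) volume 0 h :=
    (hω.2.1.comp (by fun_prop) fun r hr => mem_Ici.2 (div_nonneg
      (sub_nonneg.2 (uIcc_of_le hh.le ▸ hr).2) hl0.le)).intervalIntegrable
  rw [integral_congr hcongr, integral_sub intervalIntegrable_const (hint.const_mul _),
    intervalIntegral.integral_const, intervalIntegral.integral_const_mul,
    integral_comp_sub_left (fun u => ω (u / (h / D))) h, integral_comp_div _ hl0.ne']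
  simp only [sub_self, sub_zero, zero_div, div_div_cancel₀ hh.ne', smul_eq_mul]
  field_simp
  ring

lemma integral_extremalProfile (hω : IsModulus ω) (hconc : ConcaveOn ℝ (Ici 0) ω)
    (hh : 0 < h) (hhD : h < D) :
    ∫ r in (0:ℝ)..D, extremalProfile ω h D r = (1 - h / D) * ∫ s in (0:ℝ)..D, ω s := by
  have hD : 0 < D := hh.trans hhD
  have hl1 : 0 < 1 - h / D := by rw [sub_pos, div_lt_one hD]; exact hhD
  have hcongr : EqOn (extremalProfile ω h D)
      (fun r => h / D ^ 2 * (∫ s in (0:ℝ)..D, ω s) + (1 - h / D) * ω ((r - h) / (1 - h / D)))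
      (uIcc h D) := by
    intro r hr
    rw [uIcc_of_le hhD.le] at hr
    rcases eq_or_lt_of_le hr.1 with rfl | hlt
    · simp [extremalProfile, hω.1]
    · simp only [extremalProfile, if_neg (not_le.2 hlt), min_eq_left hr.2]
  have hint : IntervalIntegrable (fun r => ω ((r - h) / (1 - h / D))) volume h D :=
    (hω.2.1.comp (by fun_prop) fun r hr => mem_Ici.2 (div_nonneg
      (sub_nonneg.2 (uIcc_of_le hhD.le ▸ hr).1) hl1.le)).intervalIntegrable
  have hcont := (continuous_extremalProfile hω hconc hh hhD).intervalIntegrable (μ := volume)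
  rw [← integral_add_adjacent_intervals (hcont 0 h) (hcont h D),
    integral_extremalProfile_eq_zero hω hh hhD, zero_add, integral_congr hcongr,
    integral_add intervalIntegrable_const (hint.const_mul _), intervalIntegral.integral_const,
    intervalIntegral.integral_const_mul,
    integral_comp_sub_right (fun u => ω (u / (1 - h / D))) h,
    integral_comp_div _ hl1.ne', sub_self, zero_div,
    show (D - h) / (1 - h / D) = D by field_simp [(sub_pos.2 hhD).ne'], smul_eq_mul, smul_eq_mul]
  field_simp
  ring

lemma le_integral_extremalProfile_abs_sub (hω : IsModulus ω) (hconc : ConcaveOn ℝ (Ici 0) ω)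
    (hh : 0 < h) (hhD : h < D) {a b c : ℝ} (hac : a ≤ c) (hcb : c ≤ b) :
    2 * (∫ r in (0:ℝ)..D, extremalProfile ω h D r) +
        (b - a - 2 * D) * extremalProfile ω h D D ≤
      ∫ x in a..b, extremalProfile ω h D |x - c| := by
  have hint := (continuous_extremalProfile hω hconc hh hhD).intervalIntegrable (μ := volume)
  have hmono := extremalProfile_mono hω hh hhD
  rw [integral_comp_abs_sub (continuous_extremalProfile hω hconc hh hhD) hac hcb,
    ← integral_add_adjacent_intervals (hint 0 D) (hint D (c - a)),
    ← integral_add_adjacent_intervals (hint 0 D) (hint D (b - c))]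
  linarith [hmono.sub_mul_le_integral D (c - a), hmono.sub_mul_le_integral D (b - c)]

noncomputable def extremalFunction (ω : ℝ → ℝ) (h D : ℝ) (K : Set ℝ) (x : ℝ) : ℝ :=
  extremalProfile ω h D (Metric.infDist x K)

lemma abs_extremalFunction_sub_le (hω : IsModulus ω) (hconc : ConcaveOn ℝ (Ici 0) ω)
    (hh : 0 < h) (hhD : h < D) (K : Set ℝ) (x y : ℝ) :
    |extremalFunction ω h D K x - extremalFunction ω h D K y| ≤ ω |x - y| := by
  have hlip : |Metric.infDist x K - Metric.infDist y K| ≤ |x - y| := by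
    simpa [Real.dist_eq] using (Metric.lipschitz_infDist_pt K).dist_le_mul x y
  exact (abs_extremalProfile_sub_le hω hconc hh hhD _ _).trans (hω.mono (abs_nonneg _) hlip)

lemma continuous_extremalFunction (hω : IsModulus ω) (hconc : ConcaveOn ℝ (Ici 0) ω)
    (hh : 0 < h) (hhD : h < D) (K : Set ℝ) : Continuous (extremalFunction ω h D K) :=
  (continuous_extremalProfile hω hconc hh hhD).comp (Metric.continuous_infDist_pt K)

lemma integral_extremalFunction_eq_zero (hω : IsModulus ω) (hconc : ConcaveOn ℝ (Ici 0) ω)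
    (hh : 0 < h) (hhD : h < D) {K : Set ℝ} {c : ℝ} (hc : c ∈ K)
    (hK : ∀ y ∈ K, y ≠ c → 2 * h ≤ |y - c|) :
    ∫ x in (c - h)..(c + h), extremalFunction ω h D K x = 0 := by
  have hnear : EqOn (extremalFunction ω h D K) (fun x => extremalProfile ω h D |x - c|)
      (uIcc (c - h) (c + h)) := by
    intro x hx
    rw [uIcc_of_le (by linarith)] at hx
    have hxc : |x - c| ≤ h := abs_le.2 ⟨by linarith [hx.1], by linarith [hx.2]⟩
    simp only [extremalFunction, ← Real.dist_eq]
    congr 1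
    refine Metric.infDist_eq_dist_of_forall_le hc fun z hz => ?_
    rcases eq_or_ne z c with rfl | hzc
    · exact le_rfl
    · have := hK z hz hzc
      rw [Real.dist_eq, Real.dist_eq]
      linarith [abs_sub_le z x c, abs_sub_comm z x]
  rw [integral_congr hnear, integral_comp_abs_sub (continuous_extremalProfile hω hconc hh hhD)
    (by linarith) (by linarith), sub_sub_cancel, add_sub_cancel_left,
    integral_extremalProfile_eq_zero hω hh hhD, add_zero]

lemma le_integral_extremalFunction (hω : IsModulus ω) (hconc : ConcaveOn ℝ (Ici 0) ω)
    (hh : 0 < h) (hhD : h < D) {a b : ℝ} {ι : Type*} {s : Finset ι} (hs : s.Nonempty)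
    {t : ι → ℝ} (ht : ∀ i ∈ s, t i ∈ Icc a b) :
    2 * s.card * (∫ r in (0:ℝ)..D, extremalProfile ω h D r) +
        (b - a - 2 * s.card * D) * extremalProfile ω h D D ≤
      ∫ x in a..b, extremalFunction ω h D (t '' s) x := by
  classical
  set F := extremalProfile ω h D
  have hcont := continuous_extremalProfile hω hconc hh hhD
  -- `F ≤ F D`: the value at the nearest knot bounds the sum over all knots up to `(#s - 1) F D`
  have hpoint : ∀ x, ∑ i ∈ s, F |x - t i| - ((s.card : ℝ) - 1) * F D ≤
      extremalFunction ω h D (t '' s) x := by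
    intro x
    obtain ⟨-, ⟨j, hj, rfl⟩, hdist⟩ :=
      (s.finite_toSet.image t).isCompact.exists_infDist_eq_dist (hs.to_set.image t) x
    have := Finset.sum_le_add_card_sub_one_mul hj fun i _ =>
      extremalProfile_le hω hh hhD |x - t i|
    rw [extremalFunction, hdist, Real.dist_eq]
    linarith
  obtain ⟨i₀, hi₀⟩ := hs
  have hab : a ≤ b := (ht i₀ hi₀).1.trans (ht i₀ hi₀).2
  have hsum_int : IntervalIntegrable (fun x => ∑ i ∈ s, F |x - t i|) volume a b :=
    (show Continuous fun x => ∑ i ∈ s, F |x - t i| by fun_prop).intervalIntegrable _ _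
  calc _ = ∑ i ∈ s, (2 * (∫ r in (0:ℝ)..D, F r) + (b - a - 2 * D) * F D) -
        ((s.card : ℝ) - 1) * (b - a) * F D := by
        rw [Finset.sum_const, nsmul_eq_mul]; ring
    _ ≤ ∑ i ∈ s, (∫ x in a..b, F |x - t i|) - ((s.card : ℝ) - 1) * (b - a) * F D := by
        gcongr with i hi
        exact le_integral_extremalProfile_abs_sub hω hconc hh hhD (ht i hi).1 (ht i hi).2
    _ = ∫ x in a..b, (∑ i ∈ s, F |x - t i| - ((s.card : ℝ) - 1) * F D) := by
        rw [integral_sub hsum_int intervalIntegrable_const, integral_finsetSum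
          fun i _ => (show Continuous fun x => F |x - t i| by fun_prop).intervalIntegrable _ _,
          intervalIntegral.integral_const, smul_eq_mul]
        ring
    _ ≤ _ := integral_mono_on hab (hsum_int.sub intervalIntegrable_const)
        ((continuous_extremalFunction hω hconc hh hhD _).intervalIntegrable _ _)
        fun x _ => hpoint x

end ExtremalFunction

namespace AdmKnots

variable {a b h : ℝ} {n : ℕ} {t : ℕ → ℝ}

lemma add_lt_sub (ht : AdmKnots a b h n t) (hh : 0 ≤ h) {i j : ℕ} (hi : 1 ≤ i) (hij : i < j)
    (hj : j ≤ n) : t i + h < t j - h := by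
  induction j, hij using Nat.le_induction with
  | base => exact ht.2.1 i hi hj
  | succ k hik ih => linarith [ih (by omega), ht.2.1 k (by omega) (by omega)]

lemma mem_Icc (ht : AdmKnots a b h n t) (hh : 0 ≤ h) {i : ℕ} (hi : i ∈ Finset.Icc 1 n) :
    t i ∈ Icc a b := by
  rw [Finset.mem_Icc] at hi
  constructor
  · rcases eq_or_lt_of_le hi.1 with rfl | hlt
    · linarith [ht.1]
    · linarith [ht.1, ht.add_lt_sub hh le_rfl hlt hi.2]
  · rcases eq_or_lt_of_le hi.2 with rfl | hlt
    · linarith [ht.2.2]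
    · linarith [ht.2.2, ht.add_lt_sub hh hi.1 hlt le_rfl]

lemma two_mul_le_abs_sub (ht : AdmKnots a b h n t) (hh : 0 ≤ h) {i j : ℕ}
    (hi : i ∈ Finset.Icc 1 n) (hj : j ∈ Finset.Icc 1 n) (hij : i ≠ j) :
    2 * h ≤ |t i - t j| := by
  rw [Finset.mem_Icc] at hi hj
  rcases hij.lt_or_gt with hlt | hlt
  · linarith [ht.add_lt_sub hh hi.1 hlt hj.2, neg_abs_le (t i - t j)]
  · linarith [ht.add_lt_sub hh hj.1 hlt hi.2, le_abs_self (t i - t j)]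

end AdmKnots

lemma meanInfo_extremalFunction_smul {E : Type*} [NormedAddCommGroup E] [NormedSpace ℝ E]
    [CompleteSpace E] {ω : ℝ → ℝ} (hω : IsModulus ω) (hconc : ConcaveOn ℝ (Ici 0) ω)
    {a b h D : ℝ} (hh : 0 < h) (hhD : h < D) {n : ℕ} {t : ℕ → ℝ} (ht : AdmKnots a b h n t)
    (e : E) :
    meanInfo h n t (fun u => extremalFunction ω h D (t '' ↑(Finset.Icc 1 n)) u • e) = 0 := by
  funext i
  have hi : (i : ℕ) + 1 ∈ Finset.Icc 1 n := Finset.mem_Icc.2 ⟨by omega, i.isLt⟩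
  rw [meanInfo, intervalIntegral.integral_smul_const,
    integral_extremalFunction_eq_zero hω hconc hh hhD (mem_image_of_mem t hi), zero_smul,
    smul_zero, Pi.zero_apply]
  rintro _ ⟨j, hj, rfl⟩ hne
  exact ht.two_mul_le_abs_sub hh.le hj hi fun hji => hne (hji ▸ rfl)

lemma le_of_forall_norm_integral_sub_le {E : Type*} [NormedAddCommGroup E] [NormedSpace ℝ E]
    [CompleteSpace E] [Nontrivial E] {ω : ℝ → ℝ} (hω : IsModulus ω)
    (hconc : ConcaveOn ℝ (Ici 0) ω) {a b h D : ℝ} {n : ℕ} (hn : 0 < n) (hh : 0 < h) (hhD : h < D)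
    (hba : b - a = 2 * n * D) {t : ℕ → ℝ} (ht : AdmKnots a b h n t) {Φ : (Fin n → E) → E}
    {c : ℝ} (hc : ∀ f : ℝ → E, HHolder ω a b f → ‖(∫ u in a..b, f u) - Φ (meanInfo h n t f)‖ ≤ c) :
    2 * n * (1 - h / D) * ∫ s in (0:ℝ)..D, ω s ≤ c := by
  obtain ⟨e, he⟩ := exists_norm_eq E zero_le_one
  set φ := extremalFunction ω h D (t '' ↑(Finset.Icc 1 n))
  have hg : HHolder ω a b fun u => φ u • e := fun s _ u _ => by
    simpa only [← sub_smul, norm_smul, he, mul_one, Real.norm_eq_abs] using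
      abs_extremalFunction_sub_le hω hconc hh hhD _ u s
  have hφ := le_integral_extremalFunction hω hconc hh hhD ⟨1, Finset.mem_Icc.2 ⟨le_rfl, hn⟩⟩
    fun i hi => ht.mem_Icc hh.le hi
  rw [Nat.card_Icc, Nat.add_sub_cancel, integral_extremalProfile hω hconc hh hhD, hba,
    sub_self, zero_mul, add_zero] at hφ
  calc _ ≤ ∫ u in a..b, φ u := by linarith
    _ ≤ ‖∫ u in a..b, φ u • e‖ := by
      rw [intervalIntegral.integral_smul_const, norm_smul, he, mul_one, Real.norm_eq_abs]
      exact le_abs_self _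
    _ ≤ c := norm_integral_le_of_forall_norm_sub_le hc hg hg.neg (by
      rw [show -(fun u => φ u • e) = fun u => φ u • -e by funext; simp,
        meanInfo_extremalFunction_smul hω hconc hh hhD ht,
        meanInfo_extremalFunction_smul hω hconc hh hhD ht])

theorem optimal_recovery_integral_mean_values_general
    {E : Type*} [NormedAddCommGroup E] [NormedSpace ℝ E] [CompleteSpace E] [Nontrivial E]
    (ω : ℝ → ℝ) (hω : IsModulus ω) (hconc : ConcaveOn ℝ (Set.Ici 0) ω)
    (a b : ℝ) (n : ℕ) (hn : 0 < n) (h : ℝ) (hh : 0 < h)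
    (hnh : 2 * (n : ℝ) * h < b - a) :
    (AdmKnots a b h n (uniformKnots a b n) ∧
      ∀ f : ℝ → E, HHolder ω a b f →
        ‖(∫ u in a..b, f u) -
            ((b - a) / (n : ℝ)) • ∑ i : Fin n, meanInfo h n (uniformKnots a b n) f i‖ ≤
          2 * (n : ℝ) * (1 - 2 * (n : ℝ) * h / (b - a)) *
            ∫ s in (0:ℝ)..((b - a) / (2 * (n : ℝ))), ω s) ∧
    ∀ t : ℕ → ℝ, AdmKnots a b h n t → ∀ Φ : (Fin n → E) → E, ∀ c : ℝ,
      (∀ f : ℝ → E, HHolder ω a b f → ‖(∫ u in a..b, f u) - Φ (meanInfo h n t f)‖ ≤ c) →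
      2 * (n : ℝ) * (1 - 2 * (n : ℝ) * h / (b - a)) *
          ∫ s in (0:ℝ)..((b - a) / (2 * (n : ℝ))), ω s ≤ c := by
  set D := (b - a) / (2 * n) with hD
  have hn' : (0 : ℝ) < n := Nat.cast_pos.2 hn
  have hhD : h < D := by rw [hD, lt_div_iff₀ (by positivity)]; linarith
  have hba : b - a = 2 * n * D := by rw [hD]; field_simp
  rw [show 2 * n * h / (b - a) = h / D by rw [hD]; field_simp]
  refine ⟨⟨admKnots_uniformKnots hn hnh, fun f hf => ?_⟩, fun t ht Φ c hc =>
    le_of_forall_norm_integral_sub_le hω hconc hn hh hhD hba ht hc⟩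
  rw [smul_sum_meanInfo_uniformKnots hD]
  have hb : b = a + 2 * n * D := by linarith
  have := norm_integral_sub_sum_means_le hω hh hhD n (hb ▸ hf)
  rwa [← hb] at this

/-- Optimal recovery of the integral on `H^ω([a,b],E)` (concave `ω`) from mean values of the
function over `n` intervals of length `2h`: the optimal error equals
`2n(1 − 2nh/(b−a)) ∫_0^{(b−a)/(2n)} ω(t) dt`; it is attained at the uniform knots with the
method `Φ*(y₁,…,y_n) = ((b−a)/n)(y₁ + ⋯ + y_n)`. -/
theorem optimal_recovery_integral_mean_values
    {E : Type*} [NormedAddCommGroup E] [NormedSpace ℝ E] [CompleteSpace E] [Nontrivial E]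
    (ω : ℝ → ℝ) (hω : IsModulus ω) (hconc : ConcaveOn ℝ (Set.Ici 0) ω)
    (a b : ℝ) (hab : a < b) (n : ℕ) (hn : 0 < n) (h : ℝ) (hh : 0 < h)
    (hnh : 2 * (n : ℝ) * h < b - a) :
    (AdmKnots a b h n (uniformKnots a b n) ∧
      ∀ f : ℝ → E, HHolder ω a b f →
        ‖(∫ u in a..b, f u) -
            ((b - a) / (n : ℝ)) • ∑ i : Fin n, meanInfo h n (uniformKnots a b n) f i‖ ≤
          2 * (n : ℝ) * (1 - 2 * (n : ℝ) * h / (b - a)) *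
            ∫ s in (0:ℝ)..((b - a) / (2 * (n : ℝ))), ω s) ∧
    ∀ t : ℕ → ℝ, AdmKnots a b h n t → ∀ Φ : (Fin n → E) → E, ∀ c : ℝ,
      (∀ f : ℝ → E, HHolder ω a b f → ‖(∫ u in a..b, f u) - Φ (meanInfo h n t f)‖ ≤ c) →
      2 * (n : ℝ) * (1 - 2 * (n : ℝ) * h / (b - a)) *
          ∫ s in (0:ℝ)..((b - a) / (2 * (n : ℝ))), ω s ≤ c :=
  optimal_recovery_integral_mean_values_general ω hω hconc a b n hn h hh hnh
end

section
/- Landau-type inequality for the derivative via the uniform norm of the function: Let ω be a modulus of continuity, E a real Banach space, and let f: [a,b] → E be continuously differentiable with K := sup_{t'≠t''∈[a,b]} ‖f′(t′) − f′(t″)‖ / ω(|t′ − t″|) < ∞. Let t ∈ [a,b] and h₁, h₂ ≥ 0 with h₁ + h₂ > 0 and [t − h₁, t + h₂] ⊆ [a,b]. Then, writing I(α) = ∫_0^α ω(u) du, one has ‖f′(t)‖ ≤ ((I(h₁) + I(h₂))/(h₁+h₂))·K + (2/(h₁+h₂))·sup_{u∈[a,b]} ‖f(u)‖. -/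
/-!
With `c = f' t`, the function `u ↦ f u - u • c` has derivative `f' u - c`, of norm at most
`K * ω |u - t|`. The mean value inequality with this variable bound shows that
`(h₁ + h₂) • c` differs from `f (t + h₂) - f (t - h₁)`, of norm at most `2 * M`, by at most
`K * ∫ u in t - h₁..t + h₂, ω |u - t| = K * (I(h₁) + I(h₂))`.
-/

open MeasureTheory Set

section MeanValue

variable {E : Type*} [NormedAddCommGroup E] [NormedSpace ℝ E]

theorem norm_sub_le_integral_of_norm_deriv_le {f f' : ℝ → E} {g : ℝ → ℝ} {x y : ℝ}
    (hxy : x ≤ y) (hf : ∀ u ∈ Icc x y, HasDerivWithinAt f (f' u) (Icc x y) u)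
    (hg : Continuous g) (bound : ∀ u ∈ Ico x y, ‖f' u‖ ≤ g u) :
    ‖f y - f x‖ ≤ ∫ u in x..y, g u := by
  have hf_sub : ∀ u ∈ Icc x y, HasDerivWithinAt (fun v => f v - f x) (f' u) (Icc x y) u :=
    fun u hu => (hf u hu).sub_const (f x)
  refine image_norm_le_of_norm_deriv_right_le_deriv_boundary
    (fun u hu => (hf_sub u hu).continuousWithinAt)
    (fun u hu => (hf_sub u (Ico_subset_Icc_self hu)).mono_of_mem_nhdsWithin
      (Icc_mem_nhdsGE_of_mem hu))
    (by simp) (fun u => (hg.integral_hasStrictDerivAt x u).hasDerivAt) bound ⟨hxy, le_rfl⟩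

theorem norm_sub_sub_smul_le_integral {f f' : ℝ → E} {g : ℝ → ℝ} {x y : ℝ} (c : E)
    (hxy : x ≤ y) (hf : ∀ u ∈ Icc x y, HasDerivWithinAt f (f' u) (Icc x y) u)
    (hg : Continuous g) (bound : ∀ u ∈ Icc x y, ‖f' u - c‖ ≤ g u) :
    ‖f y - f x - (y - x) • c‖ ≤ ∫ u in x..y, g u := by
  have hφ : ∀ u ∈ Icc x y, HasDerivWithinAt (fun v => f v - v • c) (f' u - c) (Icc x y) u :=
    fun u hu => (hf u hu).sub ((hasDerivWithinAt_id u _).smul_const c |>.congr_deriv (one_smul ℝ c))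
  have := norm_sub_le_integral_of_norm_deriv_le hxy hφ hg
    (fun u hu => bound u (Ico_subset_Icc_self hu))
  rwa [show f y - y • c - (f x - x • c) = f y - f x - (y - x) • c by rw [sub_smul]; abel] at this

end MeanValue

theorem ContinuousOn.continuous_comp_abs_sub {g : ℝ → ℝ} (hg : ContinuousOn g (Ici 0)) (t : ℝ) :
    Continuous fun u => g |u - t| :=
  hg.comp_continuous (by fun_prop) fun u => mem_Ici.2 (abs_nonneg _)

section IntegralAbs

variable (g : ℝ → ℝ) (t : ℝ) {h : ℝ}

theorem integral_comp_abs_sub_right (hh : 0 ≤ h) :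
    ∫ u in t..t + h, g |u - t| = ∫ u in (0 : ℝ)..h, g u := by
  rw [intervalIntegral.integral_comp_sub_right (fun u => g |u|), sub_self, add_sub_cancel_left]
  refine intervalIntegral.integral_congr fun u hu => ?_
  rw [uIcc_of_le hh] at hu
  simp only [abs_of_nonneg hu.1]

theorem integral_comp_abs_sub_left (hh : 0 ≤ h) :
    ∫ u in t - h..t, g |u - t| = ∫ u in (0 : ℝ)..h, g u := by
  simp_rw [abs_sub_comm _ t]
  rw [intervalIntegral.integral_comp_sub_left (fun u => g |u|), sub_self, sub_sub_cancel]
  refine intervalIntegral.integral_congr fun u hu => ?_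
  rw [uIcc_of_le hh] at hu
  simp only [abs_of_nonneg hu.1]

theorem integral_comp_abs_sub_s17 (hg : ContinuousOn g (Ici 0)) {h₁ h₂ : ℝ}
    (hh₁ : 0 ≤ h₁) (hh₂ : 0 ≤ h₂) :
    ∫ u in t - h₁..t + h₂, g |u - t| = (∫ u in (0 : ℝ)..h₁, g u) + ∫ u in (0 : ℝ)..h₂, g u := by
  have hcont := hg.continuous_comp_abs_sub t
  rw [← intervalIntegral.integral_add_adjacent_intervals (b := t) (hcont.intervalIntegrable _ _)
    (hcont.intervalIntegrable _ _), integral_comp_abs_sub_left g t hh₁,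
    integral_comp_abs_sub_right g t hh₂]

end IntegralAbs

theorem landau_inequality_general
    {E : Type*} [NormedAddCommGroup E] [NormedSpace ℝ E]
    (ω : ℝ → ℝ) (hω : IsModulus ω)
    (a b : ℝ) (f f' : ℝ → E)
    (hdiff : ∀ u ∈ Set.Icc a b, HasDerivWithinAt f (f' u) (Set.Icc a b) u)
    (K : ℝ)
    (hK : ∀ s ∈ Set.Icc a b, ∀ u ∈ Set.Icc a b, ‖f' s - f' u‖ ≤ K * ω |s - u|)
    (M : ℝ) (hM : ∀ u ∈ Set.Icc a b, ‖f u‖ ≤ M)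
    (t h₁ h₂ : ℝ) (hh₁ : 0 ≤ h₁) (hh₂ : 0 ≤ h₂) (hpos : 0 < h₁ + h₂)
    (hleft : a ≤ t - h₁) (hright : t + h₂ ≤ b) :
    ‖f' t‖ ≤
      (((∫ u in (0:ℝ)..h₁, ω u) + ∫ u in (0:ℝ)..h₂, ω u) / (h₁ + h₂)) * K +
        (2 / (h₁ + h₂)) * M := by
  obtain ⟨-, hω_cont, -, -⟩ := hω
  set I := (∫ u in (0:ℝ)..h₁, ω u) + ∫ u in (0:ℝ)..h₂, ω u
  have hI : Icc (t - h₁) (t + h₂) ⊆ Icc a b := Icc_subset_Icc hleft hright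
  have hleft_mem : t - h₁ ∈ Icc a b := hI ⟨le_rfl, by linarith⟩
  have hright_mem : t + h₂ ∈ Icc a b := hI ⟨by linarith, le_rfl⟩
  have hinc : ‖f (t + h₂) - f (t - h₁) - (h₁ + h₂) • f' t‖ ≤ K * I := by
    have := norm_sub_sub_smul_le_integral (g := fun u => K * ω |u - t|) (f' t) (by linarith)
      (fun u hu => (hdiff u (hI hu)).mono hI)
      (continuous_const.mul (hω_cont.continuous_comp_abs_sub t))
      (fun u hu => hK u (hI hu) t (hI ⟨by linarith, by linarith⟩))
    rwa [intervalIntegral.integral_const_mul, integral_comp_abs_sub_s17 ω t hω_cont hh₁ hh₂,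
      show t + h₂ - (t - h₁) = h₁ + h₂ by ring] at this
  have hends : ‖f (t + h₂) - f (t - h₁)‖ ≤ 2 * M := by
    linarith [norm_sub_le (f (t + h₂)) (f (t - h₁)), hM _ hleft_mem, hM _ hright_mem]
  have key : (h₁ + h₂) * ‖f' t‖ ≤ K * I + 2 * M :=
    calc (h₁ + h₂) * ‖f' t‖ = ‖(h₁ + h₂) • f' t‖ := by rw [norm_smul, Real.norm_of_nonneg hpos.le]
      _ ≤ ‖f (t + h₂) - f (t - h₁)‖ + ‖f (t + h₂) - f (t - h₁) - (h₁ + h₂) • f' t‖ :=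
        norm_le_norm_add_norm_sub _ _
      _ ≤ K * I + 2 * M := by linarith
  rw [div_mul_eq_mul_div, div_mul_eq_mul_div, ← add_div, le_div_iff₀ hpos]
  linarith

/-- Landau-type inequality: the norm of the derivative at a point is estimated via the
`ω`-seminorm of the derivative and the uniform norm of the function. -/
theorem landau_inequality
    {E : Type*} [NormedAddCommGroup E] [NormedSpace ℝ E] [CompleteSpace E]
    (ω : ℝ → ℝ) (hω : IsModulus ω)
    (a b : ℝ) (hab : a ≤ b) (f f' : ℝ → E)
    (hdiff : ∀ u ∈ Set.Icc a b, HasDerivWithinAt f (f' u) (Set.Icc a b) u)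
    (hcont : ContinuousOn f' (Set.Icc a b))
    (K : ℝ) (hK0 : 0 ≤ K)
    (hK : ∀ s ∈ Set.Icc a b, ∀ u ∈ Set.Icc a b, ‖f' s - f' u‖ ≤ K * ω |s - u|)
    (M : ℝ) (hM : ∀ u ∈ Set.Icc a b, ‖f u‖ ≤ M)
    (t h₁ h₂ : ℝ) (hh₁ : 0 ≤ h₁) (hh₂ : 0 ≤ h₂) (hpos : 0 < h₁ + h₂)
    (hleft : a ≤ t - h₁) (hright : t + h₂ ≤ b) :
    ‖f' t‖ ≤
      (((∫ u in (0:ℝ)..h₁, ω u) + ∫ u in (0:ℝ)..h₂, ω u) / (h₁ + h₂)) * K +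
        (2 / (h₁ + h₂)) * M :=
  landau_inequality_general ω hω a b f f' hdiff K hK M hM t h₁ h₂ hh₁ hh₂ hpos hleft hright
end
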